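/- Let R > 0, ν > 1, and let l₁, l₂ > 0 with l₁ + l₂ = πR; set α₁ := sin(l₁/(2R)), α₂ := sin(l₂/(2R)), and h₊(x) := (1/ν)( −sin²[x/(2R)] + cos[x/(2R)]√(ν² − sin²[x/(2R)]) ). Then ∫₀^{l₁} ( h₊(σ + πR) − h₊(σ + 2πR − l₁) ) dσ = H(α₂,ν) + H(α₁,ν) − H(1,ν) − (R/ν)·sin(l₁/R), where H(α,ν) := R( (α/ν)√(ν² − α²) + ν arcsin(α/ν) ). -/

import Mathlib

/-!
Since `∂H(α,ν)/∂α = (2R/ν)√(ν² − α²)`, the function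
`F(x) = H(sin(x/(2R)), ν) + (R/ν)(sin(x/(2R)) cos(x/(2R)) − x/(2R))` is a primitive of `h₊`.
Both integrals are therefore differences of values of `F`; with `a = l₁/(2R)` the half-angles of
the four endpoints are `π/2`, `a + π/2`, `π − a` and `π`, and `l₂/(2R) = π/2 − a` turns
`cos a` into `α₂`.
-/

open Real intervalIntegral

/-- `h₊(x) = (1/ν)(−sin²[x/(2R)] + cos[x/(2R)] √(ν² − sin²[x/(2R)]))`. -/
noncomputable def hPlus (R ν x : ℝ) : ℝ :=
  (1 / ν) * (-(sin (x / (2 * R))) ^ 2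
    + cos (x / (2 * R)) * Real.sqrt (ν ^ 2 - (sin (x / (2 * R))) ^ 2))

/-- `H(α,ν) = R((α/ν)√(ν² − α²) + ν arcsin(α/ν))`. -/
noncomputable def Hfun (R α ν : ℝ) : ℝ :=
  R * ((α / ν) * Real.sqrt (ν ^ 2 - α ^ 2) + ν * arcsin (α / ν))

lemma hasDerivAt_Hfun (R : ℝ) {ν α : ℝ} (hα : |α| < ν) :
    HasDerivAt (fun a => Hfun R a ν) (2 * R / ν * √(ν ^ 2 - α ^ 2)) α := by
  have hν : 0 < ν := (abs_nonneg α).trans_lt hα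
  have hpos : 0 < ν ^ 2 - α ^ 2 := by nlinarith [sq_abs α, abs_nonneg α]
  have hratio : |α / ν| < 1 := by rwa [abs_div, abs_of_pos hν, div_lt_one hν]
  have hsqrt :
      HasDerivAt (fun a => √(ν ^ 2 - a ^ 2)) (-(2 * α) / (2 * √(ν ^ 2 - α ^ 2))) α := by
    simpa using ((hasDerivAt_pow 2 α).const_sub (ν ^ 2)).sqrt hpos.ne'
  have hdiv : HasDerivAt (fun a => a / ν) (1 / ν) α := by
    simpa using (hasDerivAt_id α).div_const ν
  have harcsin : HasDerivAt (fun a => arcsin (a / ν)) (1 / √(1 - (α / ν) ^ 2) * (1 / ν)) α :=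
    (hasDerivAt_arcsin (abs_lt.1 hratio).1.ne' (abs_lt.1 hratio).2.ne).comp (h₂ := arcsin) α hdiv
  have hroot : √(1 - (α / ν) ^ 2) = √(ν ^ 2 - α ^ 2) / ν := by
    rw [show 1 - (α / ν) ^ 2 = (ν ^ 2 - α ^ 2) / ν ^ 2 by field_simp, sqrt_div hpos.le,
      sqrt_sq hν.le]
  rw [hroot] at harcsin
  refine (((hdiv.mul hsqrt).add (harcsin.const_mul ν)).const_mul R).congr_deriv ?_
  have hq := sq_sqrt hpos.le
  have hq0 := (sqrt_pos.2 hpos).ne'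
  field_simp
  linear_combination -R * hq

noncomputable def hPlusPrimitive (R ν x : ℝ) : ℝ :=
  Hfun R (sin (x / (2 * R))) ν + R / ν * (sin (x / (2 * R)) * cos (x / (2 * R)) - x / (2 * R))

lemma hasDerivAt_hPlusPrimitive {R ν : ℝ} (hR : R ≠ 0) (hν : 1 < ν) (x : ℝ) :
    HasDerivAt (hPlusPrimitive R ν) (hPlus R ν x) x := by
  have hθ : HasDerivAt (fun x => x / (2 * R)) (1 / (2 * R)) x := by
    simpa using (hasDerivAt_id x).div_const (2 * R)
  have hsin_lt : |sin (x / (2 * R))| < ν := (abs_sin_le_one _).trans_lt hν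
  have hH := (hasDerivAt_Hfun R hsin_lt).comp x hθ.sin
  have hrest := ((hθ.sin.mul hθ.cos).sub hθ).const_mul (R / ν)
  refine (hH.add hrest).congr_deriv ?_
  have hν0 : ν ≠ 0 := by positivity
  unfold hPlus
  field_simp
  linear_combination sin_sq_add_cos_sq (x / (2 * R))

lemma continuous_hPlus (R ν : ℝ) : Continuous (hPlus R ν) := by
  unfold hPlus
  fun_prop

lemma integral_hPlus {R ν : ℝ} (hR : R ≠ 0) (hν : 1 < ν) (a b : ℝ) :
    ∫ x in a..b, hPlus R ν x = hPlusPrimitive R ν b - hPlusPrimitive R ν a :=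
  integral_eq_sub_of_hasDerivAt (fun x _ => hasDerivAt_hPlusPrimitive hR hν x)
    ((continuous_hPlus R ν).intervalIntegrable a b)

lemma hPlusPrimitive_two_mul_mul {R : ℝ} (hR : R ≠ 0) (ν θ : ℝ) :
    hPlusPrimitive R ν (2 * R * θ) = Hfun R (sin θ) ν + R / ν * (sin θ * cos θ - θ) := by
  rw [hPlusPrimitive, mul_div_cancel_left₀ θ (mul_ne_zero two_ne_zero hR)]

theorem integral_h_opposite_general (R ν l₁ l₂ : ℝ) (hR : 0 < R) (hν : 1 < ν)
    (hsum : l₁ + l₂ = π * R) :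
    ∫ σ in (0 : ℝ)..l₁, (hPlus R ν (σ + π * R) - hPlus R ν (σ + 2 * π * R - l₁)) =
      Hfun R (sin (l₂ / (2 * R))) ν + Hfun R (sin (l₁ / (2 * R))) ν
        - Hfun R 1 ν - (R / ν) * sin (l₁ / R) := by
  have hR0 : R ≠ 0 := hR.ne'
  set a := l₁ / (2 * R) with ha
  have hl₁_eq : l₁ = 2 * R * a := by rw [ha]; field_simp
  have hl₂_half : l₂ / (2 * R) = π / 2 - a := by rw [ha]; field_simp; linarith
  have hshift (σ : ℝ) : σ + 2 * π * R - l₁ = σ + (2 * π * R - l₁) := by ring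
  have hint (d : ℝ) :
      IntervalIntegrable (fun σ => hPlus R ν (σ + d)) MeasureTheory.volume 0 l₁ :=
    ((continuous_hPlus R ν).comp (continuous_add_const d)).intervalIntegrable _ _
  simp_rw [hshift]
  rw [integral_sub (hint _) (hint _), integral_comp_add_right, integral_comp_add_right,
    integral_hPlus hR0 hν, integral_hPlus hR0 hν]
  rw [show l₁ + π * R = 2 * R * (a + π / 2) by rw [hl₁_eq]; ring,
    show 0 + π * R = 2 * R * (π / 2) by ring,
    show l₁ + (2 * π * R - l₁) = 2 * R * π by ring,
    show 0 + (2 * π * R - l₁) = 2 * R * (π - a) by rw [hl₁_eq]; ring]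
  have hH0 : Hfun R 0 ν = 0 := by simp [Hfun]
  have hl₁_div : l₁ / R = 2 * a := by rw [ha]; field_simp
  simp only [hPlusPrimitive_two_mul_mul hR0, hl₂_half, hl₁_div, sin_add_pi_div_two,
    cos_add_pi_div_two, sin_pi_div_two, cos_pi_div_two, sin_pi, cos_pi, sin_pi_sub, cos_pi_sub,
    sin_pi_div_two_sub, sin_two_mul, hH0]
  ring

/-- For `ν > 1` and `l₁, l₂ > 0` with `l₁ + l₂ = πR`, with `α₁ = sin(l₁/(2R))`,
`α₂ = sin(l₂/(2R))`, one has
`∫₀^{l₁} (h₊(σ + πR) − h₊(σ + 2πR − l₁)) dσ = H(α₂,ν) + H(α₁,ν) − H(1,ν) − (R/ν) sin(l₁/R)`. -/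
theorem integral_h_opposite (R ν l₁ l₂ : ℝ) (hR : 0 < R) (hν : 1 < ν)
    (hl₁ : 0 < l₁) (hl₂ : 0 < l₂) (hsum : l₁ + l₂ = π * R) :
    ∫ σ in (0 : ℝ)..l₁, (hPlus R ν (σ + π * R) - hPlus R ν (σ + 2 * π * R - l₁)) =
      Hfun R (sin (l₂ / (2 * R))) ν + Hfun R (sin (l₁ / (2 * R))) ν
        - Hfun R 1 ν - (R / ν) * sin (l₁ / R) :=
  integral_h_opposite_general R ν l₁ l₂ hR hν hsum
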